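/- arXiv:0903.2836 — 2 statements merged into one kernel-verified Lean document; each statement's English description precedes it below -/
import Mathlib

section
/- Let K₁ = {(x, y, z) ∈ ℝ³ : x² + y² ≤ z} and K₂ = {(x, y, z) ∈ ℝ³ : 2x² + y² ≤ z}. Then for every 2-dimensional plane L ⊂ ℝ³, the orthogonal projections π_L(K₁) and π_L(K₂) are positively homothetic: there exist a point w ∈ L's ambient space and a scalar λ > 0 with π_L(K₁) = w + λ·π_L(K₂). -/
/-- The orthogonal projection of `ℝⁿ` onto the plane `p + L`. -/
noncomputable def planeProj {n : ℕ} (p : EuclideanSpace ℝ (Fin n))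
    (L : Submodule ℝ (EuclideanSpace ℝ (Fin n))) (x : EuclideanSpace ℝ (Fin n)) :
    EuclideanSpace ℝ (Fin n) :=
  p + (L.orthogonalProjection (x - p) : EuclideanSpace ℝ (Fin n))

/-!
Projecting onto `p + L` is projecting along a normal vector `u ∈ Lᗮ`, so every map of the form
`x ↦ l • x + φ x • u + v` descends to a homothety of ratio `l` on `p + L`. It therefore suffices
to carry `K₂` onto `K₁` by such a map. If `u` is vertical, the shear `x ↦ x - x₀² e₂` does.
Otherwise `φ` can be taken linear: the rank-one perturbation `N = l • 1 + (u₀, u₁) φᵀ` of the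
horizontal homothety can be chosen with `|N y|² = l (2 y₀² + y₁²)`, and a translation absorbs the
linear terms of the paraboloid inequality.
-/

open Function Set Module

theorem Submodule.exists_mem_orthogonal_ne_zero_of_finrank_lt {𝕜 E : Type*} [RCLike 𝕜]
    [NormedAddCommGroup E] [InnerProductSpace 𝕜 E] {L : Submodule 𝕜 E} [L.HasOrthogonalProjection]
    (h : finrank 𝕜 L < finrank 𝕜 E) : ∃ u ∈ Lᗮ, u ≠ 0 := by
  refine Lᗮ.ne_bot_iff.mp fun hbot => ?_
  rw [Submodule.orthogonal_eq_bot_iff] at hbot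
  subst hbot
  simp [finrank_top] at h

theorem surjective_smul_add_smul_add {𝕜 E : Type*} [Field 𝕜] [AddCommGroup E] [Module 𝕜 E]
    (φ : E →ₗ[𝕜] 𝕜) (u v : E) {l : 𝕜} (hl : l ≠ 0) (hs : l + φ u ≠ 0) :
    Surjective fun x => l • x + φ x • u + v := by
  intro y
  set c := (l + φ u)⁻¹ * φ (y - v)
  have hc : φ (l⁻¹ • (y - v - c • u)) = c := by
    simp only [map_smul, map_sub, smul_eq_mul, c]
    field_simp
    ring
  refine ⟨l⁻¹ • (y - v - c • u), ?_⟩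
  simp only [hc, smul_smul, mul_inv_cancel₀ hl, one_smul]
  abel

section planeProj

variable {n : ℕ} (p : EuclideanSpace ℝ (Fin n)) (L : Submodule ℝ (EuclideanSpace ℝ (Fin n)))

theorem planeProj_smul_add_smul_add {u : EuclideanSpace ℝ (Fin n)} (hu : u ∈ Lᗮ) (l c : ℝ)
    (x v : EuclideanSpace ℝ (Fin n)) :
    planeProj p L (l • x + c • u + v) =
      (planeProj p L v - l • planeProj p L 0) + l • planeProj p L x := by
  simp only [planeProj, map_sub, map_add, map_smul, map_zero,
    Submodule.orthogonalProjectionOnto_apply_of_mem_orthogonal hu]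
  push_cast
  module

theorem planeProj_image_eq_homothety_image {u : EuclideanSpace ℝ (Fin n)} (hu : u ∈ Lᗮ)
    {A B : Set (EuclideanSpace ℝ (Fin n))} {l : ℝ} (φ : EuclideanSpace ℝ (Fin n) → ℝ)
    (v : EuclideanSpace ℝ (Fin n)) (h : (fun x => l • x + φ x • u + v) '' A = B) :
    planeProj p L '' B =
      (fun x => (planeProj p L v - l • planeProj p L 0) + l • x) '' (planeProj p L '' A) := by
  rw [← h, image_image, image_image]
  simp only [planeProj_smul_add_smul_add p L hu]

end planeProj

def paraboloid (a : ℝ) : Set (EuclideanSpace ℝ (Fin 3)) := {q | a * q 0 ^ 2 + q 1 ^ 2 ≤ q 2}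

/-- The conditions say that `N = l • 1 + ![u₀, u₁] ⬝ ![f₀, f₁]ᵀ` satisfies `Nᵀ N = l • diag(a, 1)`.
The witness, with `s = √a` and `d = a u₀² + u₁²`, is `l = a (u₀² + u₁²) / d`,
`f₀ = a (s - 1) u₀ / d`, `f₁ = (s - a) u₁ / d`; then `l + f₀ u₀ + f₁ u₁ = s`. -/
theorem exists_shear_coeffs {a : ℝ} (ha : 0 < a) {u₀ u₁ : ℝ} (hu : u₀ ≠ 0 ∨ u₁ ≠ 0) :
    ∃ l f₀ f₁ : ℝ, 0 < l ∧ l + f₀ * u₀ + f₁ * u₁ ≠ 0 ∧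
      (l + f₀ * u₀) ^ 2 + (f₀ * u₁) ^ 2 = a * l ∧
      (f₁ * u₀) ^ 2 + (l + f₁ * u₁) ^ 2 = l ∧
      (l + f₀ * u₀) * (f₁ * u₀) + f₀ * u₁ * (l + f₁ * u₁) = 0 := by
  obtain ⟨s, hs, hs0⟩ : ∃ s : ℝ, s ^ 2 = a ∧ 0 < s := ⟨√a, Real.sq_sqrt ha.le, by positivity⟩
  have hd : 0 < a * u₀ ^ 2 + u₁ ^ 2 := by rcases hu with hu | hu <;> positivity
  have hr : 0 < u₀ ^ 2 + u₁ ^ 2 := by rcases hu with hu | hu <;> positivity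
  have hd' := hd.ne'
  refine ⟨a * (u₀ ^ 2 + u₁ ^ 2) / (a * u₀ ^ 2 + u₁ ^ 2), a * (s - 1) * u₀ / (a * u₀ ^ 2 + u₁ ^ 2),
    (s - a) * u₁ / (a * u₀ ^ 2 + u₁ ^ 2), by positivity, ?_, ?_, ?_, ?_⟩
  · convert hs0.ne'
    field_simp
    ring
  · field_simp
    linear_combination (u₀ ^ 4 + u₀ ^ 2 * u₁ ^ 2) * hs
  · field_simp
    linear_combination (u₁ ^ 2 * u₀ ^ 2 + u₁ ^ 4) * hs
  · field_simp
    linear_combination a * u₀ * u₁ * (u₀ ^ 2 + u₁ ^ 2) * hs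

-- With `N` as above, the shift `w • (f₀, f₁)` cancels the linear terms because
-- `Nᵀ (f₀, f₁) = (l + f₀ u₀ + f₁ u₁) • (f₀, f₁)`.
theorem paraboloid_shear_identity {a l f₀ f₁ u₀ u₁ u₂ w : ℝ}
    (h₀ : (l + f₀ * u₀) ^ 2 + (f₀ * u₁) ^ 2 = a * l)
    (h₁ : (f₁ * u₀) ^ 2 + (l + f₁ * u₁) ^ 2 = l)
    (h₀₁ : (l + f₀ * u₀) * (f₁ * u₀) + f₀ * u₁ * (l + f₁ * u₁) = 0)
    (hw : 2 * w * (l + f₀ * u₀ + f₁ * u₁) = u₂) (x₀ x₁ x₂ : ℝ) :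
    (l * x₀ + (f₀ * x₀ + f₁ * x₁) * u₀ + w * f₀) ^ 2
        + (l * x₁ + (f₀ * x₀ + f₁ * x₁) * u₁ + w * f₁) ^ 2
        - (l * x₂ + (f₀ * x₀ + f₁ * x₁) * u₂ + ((w * f₀) ^ 2 + (w * f₁) ^ 2))
      = l * (a * x₀ ^ 2 + x₁ ^ 2 - x₂) := by
  linear_combination x₀ ^ 2 * h₀ + x₁ ^ 2 * h₁ + 2 * x₀ * x₁ * h₀₁ + (f₀ * x₀ + f₁ * x₁) * hw

theorem exists_affine_image_paraboloid {a : ℝ} (ha : 0 < a) {u : EuclideanSpace ℝ (Fin 3)}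
    (hu : u 0 ≠ 0 ∨ u 1 ≠ 0) :
    ∃ l : ℝ, 0 < l ∧ ∃ (φ : EuclideanSpace ℝ (Fin 3) →ₗ[ℝ] ℝ) (v : EuclideanSpace ℝ (Fin 3)),
      (fun x => l • x + φ x • u + v) '' paraboloid a = paraboloid 1 := by
  obtain ⟨l, f₀, f₁, hl, hs, h₀, h₁, h₀₁⟩ := exists_shear_coeffs ha hu
  obtain ⟨w, hw⟩ : ∃ w, 2 * w * (l + f₀ * u 0 + f₁ * u 1) = u 2 :=
    ⟨u 2 / (2 * (l + f₀ * u 0 + f₁ * u 1)), by field_simp⟩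
  let φ : EuclideanSpace ℝ (Fin 3) →ₗ[ℝ] ℝ :=
    f₀ • (EuclideanSpace.proj 0 : StrongDual ℝ (EuclideanSpace ℝ (Fin 3))).toLinearMap +
      f₁ • (EuclideanSpace.proj 1 : StrongDual ℝ (EuclideanSpace ℝ (Fin 3))).toLinearMap
  have hφ : ∀ x, φ x = f₀ * x 0 + f₁ * x 1 := fun x => rfl
  set v : EuclideanSpace ℝ (Fin 3) := !₂[w * f₀, w * f₁, (w * f₀) ^ 2 + (w * f₁) ^ 2]
  refine ⟨l, hl, φ, v, ?_⟩
  have hsurj := surjective_smul_add_smul_add φ u v hl.ne' (by rwa [hφ, ← add_assoc])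
  suffices h : (fun x => l • x + φ x • u + v) ⁻¹' paraboloid 1 = paraboloid a by
    rw [← h, image_preimage_eq _ hsurj]
  ext x
  have key := paraboloid_shear_identity h₀ h₁ h₀₁ hw (x 0) (x 1) (x 2)
  simp only [paraboloid, mem_preimage, mem_ofPred_eq, PiLp.add_apply, PiLp.smul_apply,
    smul_eq_mul, hφ]
  have hv : v 0 = w * f₀ ∧ v 1 = w * f₁ ∧ v 2 = (w * f₀) ^ 2 + (w * f₁) ^ 2 := by simp [v]
  rw [hv.1, hv.2.1, hv.2.2, one_mul, ← sub_nonpos, key, ← mul_zero l, mul_le_mul_iff_right₀ hl,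
    sub_nonpos]

theorem exists_vertical_shear_image_paraboloid (a : ℝ) {u : EuclideanSpace ℝ (Fin 3)}
    (h₀ : u 0 = 0) (h₁ : u 1 = 0) (h₂ : u 2 ≠ 0) :
    ∃ φ : EuclideanSpace ℝ (Fin 3) → ℝ, (fun x => x + φ x • u) '' paraboloid a = paraboloid 1 := by
  set φ : EuclideanSpace ℝ (Fin 3) → ℝ := fun x => (1 - a) * x 0 ^ 2 / u 2
  have hφ : ∀ x (c : ℝ), φ (x + c • u) = φ x := by
    intro x c
    simp [φ, h₀]
  have hsurj : Surjective fun x => x + φ x • u := fun y =>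
    ⟨y + (-φ y) • u, by simp only; rw [hφ, neg_smul, neg_add_cancel_right]⟩
  refine ⟨φ, ?_⟩
  suffices h : (fun x => x + φ x • u) ⁻¹' paraboloid 1 = paraboloid a by
    rw [← h, image_preimage_eq _ hsurj]
  ext x
  simp only [paraboloid, mem_preimage, mem_ofPred_eq, PiLp.add_apply, PiLp.smul_apply,
    smul_eq_mul, h₀, h₁, φ, mul_zero, add_zero, one_mul, div_mul_cancel₀ _ h₂]
  constructor <;> intro h <;> linarith

theorem exists_shear_image_paraboloid {a : ℝ} (ha : 0 < a) {u : EuclideanSpace ℝ (Fin 3)}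
    (hu : u ≠ 0) :
    ∃ l : ℝ, 0 < l ∧ ∃ (φ : EuclideanSpace ℝ (Fin 3) → ℝ) (v : EuclideanSpace ℝ (Fin 3)),
      (fun x => l • x + φ x • u + v) '' paraboloid a = paraboloid 1 := by
  by_cases h : u 0 = 0 ∧ u 1 = 0
  · have h₂ : u 2 ≠ 0 := fun h₂ => hu (by ext i; fin_cases i <;> simp [h.1, h.2, h₂])
    obtain ⟨φ, hφ⟩ := exists_vertical_shear_image_paraboloid a h.1 h.2 h₂
    exact ⟨1, one_pos, φ, 0, by simpa only [one_smul, add_zero] using hφ⟩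
  · obtain ⟨l, hl, φ, v, hφ⟩ := exists_affine_image_paraboloid ha (not_and_or.mp h)
    exact ⟨l, hl, φ, v, hφ⟩

/-- The orthogonal projections of the solid paraboloids
`K₁ = {(x, y, z) : x² + y² ≤ z}` and `K₂ = {(x, y, z) : 2x² + y² ≤ z}` on every
2-dimensional plane of `ℝ³` are positively homothetic. -/
theorem paraboloid_projections_positively_homothetic
    (p : EuclideanSpace ℝ (Fin 3)) (L : Submodule ℝ (EuclideanSpace ℝ (Fin 3)))
    (hL : Module.finrank ℝ L = 2) :
    ∃ (w : EuclideanSpace ℝ (Fin 3)) (l : ℝ), 0 < l ∧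
      planeProj p L '' {q : EuclideanSpace ℝ (Fin 3) | q 0 ^ 2 + q 1 ^ 2 ≤ q 2} =
        (fun x => w + l • x) ''
          (planeProj p L '' {q : EuclideanSpace ℝ (Fin 3) | 2 * q 0 ^ 2 + q 1 ^ 2 ≤ q 2}) := by
  obtain ⟨u, hu, hu0⟩ := Submodule.exists_mem_orthogonal_ne_zero_of_finrank_lt (L := L)
    (by simp [hL, finrank_euclideanSpace])
  obtain ⟨l, hl, φ, v, hT⟩ := exists_shear_image_paraboloid two_pos hu0
  have h := planeProj_image_eq_homothety_image p L hu φ v hT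
  simp only [paraboloid, one_mul] at h
  exact ⟨_, l, hl, h⟩
end

section
/- Let K₁ and K₂ be compact convex sets in ℝⁿ (n ≥ 3), each with more than one point, such that for every hyperplane L of ℝⁿ the orthogonal projections π_L(K₁) and π_L(K₂) are homothetic. Let [x₁, z₁] be an exposed diameter of K₁ and let P₁, Q₁ be opposite closed halfspaces with K₁ ∩ P₁ = {x₁} and K₁ ∩ Q₁ = {z₁}. Then there exist an exposed diameter [x₂, z₂] of K₂ parallel to [x₁, z₁] and opposite closed halfspaces P₂ and Q₂ that are translates of P₁ and Q₁ respectively, such that K₂ ∩ P₂ = {x₂} and K₂ ∩ Q₂ = {z₂}. -/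
open scoped RealInnerProductSpace

/-- Nonempty sets `X₁` and `X₂` in `ℝⁿ` are *homothetic* provided
`X₁ = z + λ • X₂` for some point `z` and some scalar `λ ≠ 0`. -/
def Homothetic {n : ℕ} (X₁ X₂ : Set (EuclideanSpace ℝ (Fin n))) : Prop :=
  ∃ (z : EuclideanSpace ℝ (Fin n)) (l : ℝ), l ≠ 0 ∧ X₁ = (fun x => z + l • x) '' X₂

/-!
Let `x₂` and `z₂` maximize and minimize `⟪g, ·⟫` on `K₂`. The orthogonal projection `π` onto a
hyperplane `L ∋ g` preserves `⟪g, ·⟫`, so `π x₁` and `π z₁` are the unique extremizers on `π K₁`,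
and a homothety `π K₁ = t + l • π K₂` carries the extremizers of `π K₂` onto them (swapping them
when `l < 0`). Hence `π (x₁ - z₁) = |l| • π (a - b)` for every maximizer `a` and minimizer `b`.
As `n ≥ 3`, `L` may be chosen to contain any prescribed vector `v` as well, and `π` fixes `v`.
Taking for `v` the difference of two such `a - b` shows that the extremizers are unique; taking
`v = (x₂ - z₂) - c • (x₁ - z₁)`, with `c` read off from the `g`-components, gives parallelism.
-/

open Set Module OrderDual

theorem image_inter_preimage_eq_singleton_of_apply_eq {α β : Type*} {f : α → β} {π : α → α}
    {s : Set α} {T : Set β} {x : α} (hf : ∀ y, f (π y) = f y) (h : s ∩ f ⁻¹' T = {x}) :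
    π '' s ∩ f ⁻¹' T = {π x} := by
  rw [← image_inter_preimage, ← preimage_comp, show f ∘ π = f from funext hf, h, image_singleton]

section Extremizers

variable {α β : Type*} [Preorder β] {f : α → β} {s : Set α} {b : β} {x p : α}

theorem eq_of_isMaxOn_of_inter_setOf_le_eq_singleton (hs : s ∩ {y | b ≤ f y} = {x})
    (hp : p ∈ s) (hmax : IsMaxOn f s p) : p = x := by
  have hx : x ∈ s ∩ {y | b ≤ f y} := hs ▸ rfl
  have hp' : p ∈ s ∩ {y | b ≤ f y} := ⟨hp, hx.2.trans (hmax hx.1)⟩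
  rwa [hs] at hp'

theorem eq_of_isMinOn_of_inter_setOf_le_eq_singleton (hs : s ∩ {y | f y ≤ b} = {x})
    (hp : p ∈ s) (hmin : IsMinOn f s p) : p = x :=
  eq_of_isMaxOn_of_inter_setOf_le_eq_singleton (f := toDual ∘ f) (b := toDual b) hs hp hmin.dual

theorem IsMaxOn.inter_setOf_le_eq_singleton (hx : x ∈ s) (hmax : IsMaxOn f s x)
    (huniq : ∀ p ∈ s, IsMaxOn f s p → p = x) : s ∩ {y | f x ≤ f y} = {x} := by
  ext y
  constructor
  · rintro ⟨hy, hxy⟩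
    exact huniq y hy fun z hz => (hmax hz).trans hxy
  · rintro rfl
    exact ⟨hx, le_rfl⟩

theorem IsMinOn.inter_setOf_le_eq_singleton (hx : x ∈ s) (hmin : IsMinOn f s x)
    (huniq : ∀ p ∈ s, IsMinOn f s p → p = x) : s ∩ {y | f y ≤ f x} = {x} :=
  IsMaxOn.inter_setOf_le_eq_singleton (f := toDual ∘ f) hx hmin.dual fun p hp hp' =>
    huniq p hp hp'.undual

variable {π : α → α}

theorem IsMaxOn.image_of_apply_eq (hf : ∀ y, f (π y) = f y) (h : IsMaxOn f s p) :
    IsMaxOn f (π '' s) (π p) :=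
  isMaxOn_iff.2 <| forall_mem_image.2 fun y hy => by rw [hf, hf]; exact h hy

theorem IsMinOn.image_of_apply_eq (hf : ∀ y, f (π y) = f y) (h : IsMinOn f s p) :
    IsMinOn f (π '' s) (π p) :=
  (IsMaxOn.image_of_apply_eq (f := toDual ∘ f) (fun y => congrArg toDual (hf y)) h.dual).undual

end Extremizers

section Homothety

variable {E : Type*} [AddCommGroup E] [Module ℝ E] (f : E →ₗ[ℝ] ℝ) {A B : Set E}
  {z x w a b : E} {l α β : ℝ}

theorem sub_eq_abs_smul_sub_of_eq_image_homothety (hl : l ≠ 0)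
    (hAB : A = (fun y => z + l • y) '' B)
    (hx : A ∩ {y | α ≤ f y} = {x}) (hw : A ∩ {y | f y ≤ β} = {w})
    (ha : a ∈ B) (hamax : IsMaxOn f B a) (hb : b ∈ B) (hbmin : IsMinOn f B b) :
    x - w = |l| • (a - b) := by
  subst hAB
  have hmax : ∀ p ∈ B, (∀ y ∈ B, l * f y ≤ l * f p) → z + l • p = x := fun p hp hle =>
    eq_of_isMaxOn_of_inter_setOf_le_eq_singleton hx (mem_image_of_mem _ hp)
      (isMaxOn_iff.2 <| forall_mem_image.2 fun y hy => by simpa using hle y hy)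
  have hmin : ∀ p ∈ B, (∀ y ∈ B, l * f p ≤ l * f y) → z + l • p = w := fun p hp hle =>
    eq_of_isMinOn_of_inter_setOf_le_eq_singleton hw (mem_image_of_mem _ hp)
      (isMinOn_iff.2 <| forall_mem_image.2 fun y hy => by simpa using hle y hy)
  rcases hl.lt_or_gt with hneg | hpos
  · rw [← hmax b hb fun y hy => mul_le_mul_of_nonpos_left (hbmin hy) hneg.le,
      ← hmin a ha fun y hy => mul_le_mul_of_nonpos_left (hamax hy) hneg.le, abs_of_neg hneg]
    module
  · rw [← hmax a ha fun y hy => mul_le_mul_of_nonneg_left (hamax hy) hpos.le,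
      ← hmin b hb fun y hy => mul_le_mul_of_nonneg_left (hbmin hy) hpos.le, abs_of_pos hpos]
    module

end Homothety

namespace Submodule

variable {𝕜 E : Type*} [RCLike 𝕜] [NormedAddCommGroup E] [InnerProductSpace 𝕜 E]
  (L : Submodule 𝕜 E) [L.HasOrthogonalProjection]

theorem eq_of_sub_mem_of_starProjection_eq {x y : E} (hxy : x - y ∈ L)
    (h : L.starProjection x = L.starProjection y) : x = y := by
  rw [← sub_eq_zero, ← starProjection_eq_self_iff.2 hxy, map_sub, h, sub_self]

theorem inner_starProjection_of_mem {g : E} (hg : g ∈ L) (y : E) :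
    inner 𝕜 g (L.starProjection y) = inner 𝕜 g y := by
  rw [← inner_starProjection_left_eq_right, starProjection_eq_self_iff.2 hg]

end Submodule

section FiniteDimensional

variable {E : Type*} [NormedAddCommGroup E] [InnerProductSpace ℝ E] [FiniteDimensional ℝ E]

theorem Submodule.exists_le_finrank_eq_sub_one (V : Submodule ℝ E)
    (hV : finrank ℝ V < finrank ℝ E) :
    ∃ L : Submodule ℝ E, V ≤ L ∧ finrank ℝ L = finrank ℝ E - 1 := by
  have hV' : Vᗮ ≠ ⊥ := by
    intro h
    have := V.finrank_add_finrank_orthogonal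
    rw [h, finrank_bot] at this
    omega
  obtain ⟨w, hw, hw0⟩ := exists_mem_ne_zero_of_ne_bot hV'
  refine ⟨(ℝ ∙ w)ᗮ, V.le_orthogonal_orthogonal.trans
    (orthogonal_le ((span_singleton_le_iff_mem _ _).2 hw)), ?_⟩
  have := (ℝ ∙ w).finrank_add_finrank_orthogonal
  rw [finrank_span_singleton hw0] at this
  omega

theorem exists_smul_eq_of_forall_starProjection_eq_smul {g u d : E} (hu : ⟪g, u⟫ ≠ 0)
    (h : ∀ v, ∃ L : Submodule ℝ E, g ∈ L ∧ v ∈ L ∧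
      ∃ c : ℝ, L.starProjection u = c • L.starProjection d) :
    ∃ c : ℝ, c ≠ 0 ∧ d = c • u := by
  have inner_eq : ∀ L : Submodule ℝ E, g ∈ L → ∀ c : ℝ,
      L.starProjection u = c • L.starProjection d → ⟪g, u⟫ = c * ⟪g, d⟫ := fun L hg c hc => by
    simpa only [real_inner_smul_right, L.inner_starProjection_of_mem hg]
      using congrArg (⟪g, ·⟫) hc
  have hd : ⟪g, d⟫ ≠ 0 := by
    obtain ⟨L, hg, -, c, hc⟩ := h 0
    exact right_ne_zero_of_mul (inner_eq L hg c hc ▸ hu)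
  obtain ⟨L, hg, hv, c, hc⟩ := h (d - (⟪g, d⟫ / ⟪g, u⟫) • u)
  refine ⟨⟪g, d⟫ / ⟪g, u⟫, div_ne_zero hd hu, L.eq_of_sub_mem_of_starProjection_eq hv ?_⟩
  have hcu := inner_eq L hg c hc
  have hc0 : c ≠ 0 := left_ne_zero_of_mul (hcu ▸ hu)
  rw [map_smul, hc, smul_smul, hcu, show ⟪g, d⟫ / (c * ⟪g, d⟫) * c = 1 by field_simp, one_smul]

end FiniteDimensional

theorem planeProj_zero {n : ℕ} (L : Submodule ℝ (EuclideanSpace ℝ (Fin n))) :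
    planeProj 0 L = L.starProjection := by
  funext y
  simp [planeProj]

theorem exists_hyperplane_starProjection_sub_eq_smul {n : ℕ} (hn : 3 ≤ n)
    {K₁ K₂ : Set (EuclideanSpace ℝ (Fin n))}
    (hproj : ∀ L : Submodule ℝ (EuclideanSpace ℝ (Fin n)), finrank ℝ L = n - 1 →
      Homothetic (planeProj 0 L '' K₁) (planeProj 0 L '' K₂))
    {x₁ z₁ g : EuclideanSpace ℝ (Fin n)} {α β : ℝ}
    (hP₁ : K₁ ∩ {y | α ≤ ⟪g, y⟫} = {x₁}) (hQ₁ : K₁ ∩ {y | ⟪g, y⟫ ≤ β} = {z₁})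
    (v : EuclideanSpace ℝ (Fin n)) :
    ∃ L : Submodule ℝ (EuclideanSpace ℝ (Fin n)), g ∈ L ∧ v ∈ L ∧ ∃ c : ℝ, c ≠ 0 ∧
      ∀ a ∈ K₂, IsMaxOn (⟪g, ·⟫) K₂ a → ∀ b ∈ K₂, IsMinOn (⟪g, ·⟫) K₂ b →
        L.starProjection (x₁ - z₁) = c • L.starProjection (a - b) := by
  have hgv : finrank ℝ (Submodule.span ℝ {g, v}) < finrank ℝ (EuclideanSpace ℝ (Fin n)) := by
    calc finrank ℝ (Submodule.span ℝ {g, v}) ≤ 2 :=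
          (finrank_span_le_card {g, v}).trans (by simp [Finset.card_le_two])
      _ < _ := by rw [finrank_euclideanSpace_fin]; omega
  obtain ⟨L, hL, hrank⟩ := (Submodule.span ℝ {g, v}).exists_le_finrank_eq_sub_one hgv
  rw [finrank_euclideanSpace_fin] at hrank
  obtain ⟨t, l, hl, hhom⟩ := hproj L hrank
  rw [planeProj_zero] at hhom
  have hgL : g ∈ L := hL (Submodule.subset_span (by simp))
  have hπ := L.inner_starProjection_of_mem hgL
  refine ⟨L, hgL, hL (Submodule.subset_span (by simp)), |l|, abs_ne_zero.2 hl,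
    fun a ha hamax b hb hbmin => ?_⟩
  rw [map_sub, map_sub]
  exact sub_eq_abs_smul_sub_of_eq_image_homothety (innerₛₗ ℝ g) hl hhom
    (image_inter_preimage_eq_singleton_of_apply_eq hπ hP₁)
    (image_inter_preimage_eq_singleton_of_apply_eq (T := Iic β) hπ hQ₁)
    (mem_image_of_mem _ ha) (hamax.image_of_apply_eq hπ)
    (mem_image_of_mem _ hb) (hbmin.image_of_apply_eq hπ)

theorem exists_parallel_exposed_diameter_general
    (n : ℕ) (hn : 3 ≤ n)
    (K₁ K₂ : Set (EuclideanSpace ℝ (Fin n)))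
    (hc₂ : IsCompact K₂)
    (hpts₂ : ∃ a ∈ K₂, ∃ b ∈ K₂, a ≠ b)
    (hproj : ∀ (p : EuclideanSpace ℝ (Fin n)) (L : Submodule ℝ (EuclideanSpace ℝ (Fin n))),
      Module.finrank ℝ L = n - 1 →
      Homothetic (planeProj p L '' K₁) (planeProj p L '' K₂))
    (x₁ z₁ : EuclideanSpace ℝ (Fin n)) (g : EuclideanSpace ℝ (Fin n)) (α β : ℝ)
    (hβα : β < α)
    (hP₁ : K₁ ∩ {y | α ≤ ⟪g, y⟫} = {x₁}) (hQ₁ : K₁ ∩ {y | ⟪g, y⟫ ≤ β} = {z₁}) :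
    ∃ (x₂ z₂ : EuclideanSpace ℝ (Fin n)) (α' β' : ℝ), β' ≤ α' ∧
      K₂ ∩ {y | α' ≤ ⟪g, y⟫} = {x₂} ∧ K₂ ∩ {y | ⟪g, y⟫ ≤ β'} = {z₂} ∧
      ∃ c : ℝ, c ≠ 0 ∧ x₂ - z₂ = c • (x₁ - z₁) := by
  obtain ⟨a₀, ha₀, -⟩ := hpts₂
  have hcont : ContinuousOn (⟪g, ·⟫) K₂ := (continuous_const.inner continuous_id).continuousOn
  obtain ⟨x₂, hx₂, hx₂max⟩ := hc₂.exists_isMaxOn ⟨a₀, ha₀⟩ hcont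
  obtain ⟨z₂, hz₂, hz₂min⟩ := hc₂.exists_isMinOn ⟨a₀, ha₀⟩ hcont
  have key := exists_hyperplane_starProjection_sub_eq_smul (K₂ := K₂) hn (hproj 0) hP₁ hQ₁
  have hdiff : ∀ a ∈ K₂, IsMaxOn (⟪g, ·⟫) K₂ a → ∀ b ∈ K₂, IsMinOn (⟪g, ·⟫) K₂ b →
      a - b = x₂ - z₂ := by
    intro a ha hamax b hb hbmin
    obtain ⟨L, -, hL, c, hc, hπ⟩ := key (a - b - (x₂ - z₂))
    exact L.eq_of_sub_mem_of_starProjection_eq hL <| smul_right_injective _ hc <|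
      (hπ a ha hamax b hb hbmin).symm.trans (hπ x₂ hx₂ hx₂max z₂ hz₂ hz₂min)
  have hx₁ : x₁ ∈ K₁ ∩ {y | α ≤ ⟪g, y⟫} := hP₁ ▸ rfl
  have hz₁ : z₁ ∈ K₁ ∩ {y | ⟪g, y⟫ ≤ β} := hQ₁ ▸ rfl
  have hgap : ⟪g, x₁ - z₁⟫ ≠ 0 := by
    rw [inner_sub_right, sub_ne_zero]
    exact ((hz₁.2 : ⟪g, z₁⟫ ≤ β).trans_lt (hβα.trans_le hx₁.2)).ne'
  obtain ⟨c, hc, hpar⟩ := exists_smul_eq_of_forall_starProjection_eq_smul hgap fun v => by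
    obtain ⟨L, hgL, hvL, c, -, hπ⟩ := key v
    exact ⟨L, hgL, hvL, c, hπ x₂ hx₂ hx₂max z₂ hz₂ hz₂min⟩
  refine ⟨x₂, z₂, _, _, hx₂max hz₂, ?_, ?_, c, hc, hpar⟩
  · exact hx₂max.inter_setOf_le_eq_singleton hx₂ fun a ha hamax =>
      sub_left_injective (hdiff a ha hamax z₂ hz₂ hz₂min)
  · exact hz₂min.inter_setOf_le_eq_singleton hz₂ fun b hb hbmin =>
      sub_right_injective (hdiff x₂ hx₂ hx₂max b hb hbmin)

/-- Suppose the compact convex sets `K₁, K₂ ⊆ ℝⁿ` (`n ≥ 3`), each with more than one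
point, have homothetic projections on every hyperplane.  If `[x₁, z₁]` is an exposed
diameter of `K₁`, exposed by the pair of disjoint opposite closed halfspaces
`P₁ = {y : α ≤ ⟪g, y⟫}` and `Q₁ = {y : ⟪g, y⟫ ≤ β}` (so `K₁ ∩ P₁ = {x₁}` and
`K₁ ∩ Q₁ = {z₁}`), then there are an exposed diameter `[x₂, z₂]` of `K₂` parallel to
`[x₁, z₁]` and translates `P₂ = {y : α' ≤ ⟪g, y⟫}`, `Q₂ = {y : ⟪g, y⟫ ≤ β'}` of `P₁`
and `Q₁` with `K₂ ∩ P₂ = {x₂}` and `K₂ ∩ Q₂ = {z₂}`. -/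
theorem exists_parallel_exposed_diameter
    (n : ℕ) (hn : 3 ≤ n)
    (K₁ K₂ : Set (EuclideanSpace ℝ (Fin n)))
    (hc₁ : IsCompact K₁) (hc₂ : IsCompact K₂)
    (hcv₁ : Convex ℝ K₁) (hcv₂ : Convex ℝ K₂)
    (hpts₁ : ∃ a ∈ K₁, ∃ b ∈ K₁, a ≠ b) (hpts₂ : ∃ a ∈ K₂, ∃ b ∈ K₂, a ≠ b)
    (hproj : ∀ (p : EuclideanSpace ℝ (Fin n)) (L : Submodule ℝ (EuclideanSpace ℝ (Fin n))),
      Module.finrank ℝ L = n - 1 →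
      Homothetic (planeProj p L '' K₁) (planeProj p L '' K₂))
    (x₁ z₁ : EuclideanSpace ℝ (Fin n)) (g : EuclideanSpace ℝ (Fin n)) (α β : ℝ)
    (hg : ‖g‖ = 1) (hβα : β < α)
    (hP₁ : K₁ ∩ {y | α ≤ ⟪g, y⟫} = {x₁}) (hQ₁ : K₁ ∩ {y | ⟪g, y⟫ ≤ β} = {z₁}) :
    ∃ (x₂ z₂ : EuclideanSpace ℝ (Fin n)) (α' β' : ℝ), β' ≤ α' ∧
      K₂ ∩ {y | α' ≤ ⟪g, y⟫} = {x₂} ∧ K₂ ∩ {y | ⟪g, y⟫ ≤ β'} = {z₂} ∧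
      ∃ c : ℝ, c ≠ 0 ∧ x₂ - z₂ = c • (x₁ - z₁) :=
  exists_parallel_exposed_diameter_general n hn K₁ K₂ hc₂ hpts₂ hproj x₁ z₁ g α β hβα hP₁ hQ₁
end
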